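/- arXiv:hep-th/0511005 — 8 statements merged into one kernel-verified Lean document; each statement's English description precedes it below -/
import Mathlib

section
/- Let λ₁, λ₂, λ₃, λ₄ be real numbers with λ₃ ≠ λ₄, 2λ₃+λ₁ ≠ λ₂, 2λ₄+λ₁ ≠ λ₂, 2λ₃+λ₁ ≠ 0, 2λ₄+λ₁ ≠ 0 and λ₂ ≠ 0. Then the fractional triple intersection number ⟨C₁,C₁,C₁⟩ = ∑_{p=1}^{4} a_p³/(e_p·(−2a_p)) equals −1; in particular it is independent of the torus weights. -/
/-- Fractional triple intersection number ⟨C₁,C₁,C₁⟩ = −1 of K_{F₂} via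
localization: ∑ₚ aₚ³/(eₚ·(−2aₚ)) = −1, independent of the torus weights. -/
theorem KF2_triple_111
    (l1 l2 l3 l4 : ℝ)
    (h34 : l3 ≠ l4)
    (h3 : 2 * l3 + l1 ≠ l2) (h4 : 2 * l4 + l1 ≠ l2)
    (hn3 : 2 * l3 + l1 ≠ 0) (hn4 : 2 * l4 + l1 ≠ 0) (hn2 : l2 ≠ 0) :
    (2 * l3 + l1) ^ 3 / ((2 * l3 + l1 - l2) * (l3 - l4) * (-2 * (2 * l3 + l1)))
      + (2 * l4 + l1) ^ 3 / ((2 * l4 + l1 - l2) * (l4 - l3) * (-2 * (2 * l4 + l1)))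
      + l2 ^ 3 / ((l2 - 2 * l3 - l1) * (l3 - l4) * (-2 * l2))
      + l2 ^ 3 / ((l2 - 2 * l4 - l1) * (l4 - l3) * (-2 * l2)) = -1 := by
  have h34' : l3 - l4 ≠ 0 := sub_ne_zero.mpr h34
  have h43' : l4 - l3 ≠ 0 := sub_ne_zero.mpr (Ne.symm h34)
  have h3' : 2 * l3 + l1 - l2 ≠ 0 := sub_ne_zero.mpr h3
  have h4' : 2 * l4 + l1 - l2 ≠ 0 := sub_ne_zero.mpr h4
  have h3'' : l2 - 2 * l3 - l1 ≠ 0 := by intro h; apply h3'; linarith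
  have h4'' : l2 - 2 * l4 - l1 ≠ 0 := by intro h; apply h4'; linarith
  field_simp
  ring
end

section
/- Let λ₁, λ₂, λ₃, λ₄ be real numbers with λ₃ ≠ λ₄, 2λ₃+λ₁ ≠ λ₂, 2λ₄+λ₁ ≠ λ₂, 2λ₃+λ₁ ≠ 0, 2λ₄+λ₁ ≠ 0 and λ₂ ≠ 0. Then the fractional triple intersection number ⟨C₁,C₁,C₂⟩ = ∑_{p=1}^{4} a_p² b_p/(e_p·(−2a_p)) equals −1/2; in particular it is independent of the torus weights. -/
/-- Fractional triple intersection number ⟨C₁,C₁,C₂⟩ = −1/2 of K_{F₂} via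
localization: ∑ₚ aₚ²bₚ/(eₚ·(−2aₚ)) = −1/2, independent of the torus weights. -/
theorem KF2_triple_112
    (l1 l2 l3 l4 : ℝ)
    (h34 : l3 ≠ l4)
    (h3 : 2 * l3 + l1 ≠ l2) (h4 : 2 * l4 + l1 ≠ l2)
    (hn3 : 2 * l3 + l1 ≠ 0) (hn4 : 2 * l4 + l1 ≠ 0) (hn2 : l2 ≠ 0) :
    (2 * l3 + l1) ^ 2 * l3 / ((2 * l3 + l1 - l2) * (l3 - l4) * (-2 * (2 * l3 + l1)))
      + (2 * l4 + l1) ^ 2 * l4 / ((2 * l4 + l1 - l2) * (l4 - l3) * (-2 * (2 * l4 + l1)))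
      + l2 ^ 2 * l3 / ((l2 - 2 * l3 - l1) * (l3 - l4) * (-2 * l2))
      + l2 ^ 2 * l4 / ((l2 - 2 * l4 - l1) * (l4 - l3) * (-2 * l2)) = -1 / 2 := by
  have h34' : l3 - l4 ≠ 0 := sub_ne_zero.mpr h34
  have h43' : l4 - l3 ≠ 0 := sub_ne_zero.mpr (Ne.symm h34)
  have h3' : 2 * l3 + l1 - l2 ≠ 0 := sub_ne_zero.mpr h3
  have h4' : 2 * l4 + l1 - l2 ≠ 0 := sub_ne_zero.mpr h4
  have h3'' : l2 - 2 * l3 - l1 ≠ 0 := by intro h; apply h3'; linarith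
  have h4'' : l2 - 2 * l4 - l1 ≠ 0 := by intro h; apply h4'; linarith
  field_simp
  ring
end

section
/- Let λ₁, λ₂, λ₃, λ₄ be real numbers with λ₃ ≠ λ₄, 2λ₃+λ₁ ≠ λ₂, 2λ₄+λ₁ ≠ λ₂, 2λ₃+λ₁ ≠ 0, 2λ₄+λ₁ ≠ 0 and λ₂ ≠ 0. Then the fractional triple intersection number ⟨C₁,C₂,C₂⟩ = ∑_{p=1}^{4} a_p b_p²/(e_p·(−2a_p)) equals 0; in particular it is independent of the torus weights. -/
/-- Fractional triple intersection number ⟨C₁,C₂,C₂⟩ = 0 of K_{F₂} via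
localization: ∑ₚ aₚbₚ²/(eₚ·(−2aₚ)) = 0, independent of the torus weights. -/
theorem KF2_triple_122
    (l1 l2 l3 l4 : ℝ)
    (h34 : l3 ≠ l4)
    (h3 : 2 * l3 + l1 ≠ l2) (h4 : 2 * l4 + l1 ≠ l2)
    (hn3 : 2 * l3 + l1 ≠ 0) (hn4 : 2 * l4 + l1 ≠ 0) (hn2 : l2 ≠ 0) :
    (2 * l3 + l1) * l3 ^ 2 / ((2 * l3 + l1 - l2) * (l3 - l4) * (-2 * (2 * l3 + l1)))
      + (2 * l4 + l1) * l4 ^ 2 / ((2 * l4 + l1 - l2) * (l4 - l3) * (-2 * (2 * l4 + l1)))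
      + l2 * l3 ^ 2 / ((l2 - 2 * l3 - l1) * (l3 - l4) * (-2 * l2))
      + l2 * l4 ^ 2 / ((l2 - 2 * l4 - l1) * (l4 - l3) * (-2 * l2)) = 0 := by
  have h34' : l3 - l4 ≠ 0 := sub_ne_zero.mpr h34
  have h43' : l4 - l3 ≠ 0 := sub_ne_zero.mpr (Ne.symm h34)
  have h3' : 2 * l3 + l1 - l2 ≠ 0 := sub_ne_zero.mpr h3
  have h4' : 2 * l4 + l1 - l2 ≠ 0 := sub_ne_zero.mpr h4
  have h3'' : l2 - 2 * l3 - l1 ≠ 0 := by intro h; apply h3'; linarith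
  have h4'' : l2 - 2 * l4 - l1 ≠ 0 := by intro h; apply h4'; linarith
  field_simp
  ring
end

section
/- Let λ₁, λ₂, λ₃, λ₄ be real numbers with λ₃ ≠ λ₄, 2λ₃+λ₁ ≠ λ₂, 2λ₄+λ₁ ≠ λ₂, 2λ₃+λ₁ ≠ 0, 2λ₄+λ₁ ≠ 0 and λ₂ ≠ 0. Then the fractional triple intersection number ⟨C₂,C₂,C₂⟩ = ∑_{p=1}^{4} b_p³/(e_p·(−2a_p)) equals (1/2)·(λ₁λ₃² + λ₁λ₃λ₄ + λ₁λ₄² + 2λ₃λ₄² + 2λ₃²λ₄) / ((2λ₃+λ₁)(2λ₄+λ₁)λ₂). -/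
/-!
The four fixed points pair up over the two values λ₃, λ₄ of `J₂`. In the pair over `λ`, with
`x = 2λ + λ₁` and `y = λ₂`, the pole at `x = y` cancels:
`1 / ((x - y)(-2x)) + 1 / ((y - x)(-2y)) = 1 / (2xy)`.
The two remaining terms `λ₃³ / (2 x₃ y (λ₃ - λ₄))` and `λ₄³ / (2 x₄ y (λ₄ - λ₃))` combine over
`λ₃ - λ₄`, which divides `λ₃³ x₄ - λ₄³ x₃ = (λ₃ - λ₄)(λ₁(λ₃² + λ₃λ₄ + λ₄²) + 2λ₃λ₄(λ₃ + λ₄))`,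
so that pole cancels too.
-/

theorem div_sub_mul_add_div_sub_mul_swap {K : Type*} [Field K] {x y : K} (c d : K)
    (hxy : x ≠ y) (hx : x ≠ 0) (hy : y ≠ 0) :
    c / ((x - y) * d * (-2 * x)) + c / ((y - x) * d * (-2 * y)) = c / (2 * x * y * d) := by
  have hxy' : x - y ≠ 0 := sub_ne_zero.mpr hxy
  have hyx' : y - x ≠ 0 := sub_ne_zero.mpr hxy.symm
  rcases eq_or_ne d 0 with rfl | hd
  · simp
  field_simp
  ring

/-- Fractional triple intersection number ⟨C₂,C₂,C₂⟩ of K_{F₂} via localization: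
∑ₚ bₚ³/(eₚ·(−2aₚ)) = (1/2)(λ₁λ₃² + λ₁λ₃λ₄ + λ₁λ₄² + 2λ₃λ₄² + 2λ₃²λ₄)
/ ((2λ₃+λ₁)(2λ₄+λ₁)λ₂). -/
theorem KF2_triple_222
    (l1 l2 l3 l4 : ℝ)
    (h34 : l3 ≠ l4)
    (h3 : 2 * l3 + l1 ≠ l2) (h4 : 2 * l4 + l1 ≠ l2)
    (hn3 : 2 * l3 + l1 ≠ 0) (hn4 : 2 * l4 + l1 ≠ 0) (hn2 : l2 ≠ 0) :
    l3 ^ 3 / ((2 * l3 + l1 - l2) * (l3 - l4) * (-2 * (2 * l3 + l1)))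
      + l4 ^ 3 / ((2 * l4 + l1 - l2) * (l4 - l3) * (-2 * (2 * l4 + l1)))
      + l3 ^ 3 / ((l2 - 2 * l3 - l1) * (l3 - l4) * (-2 * l2))
      + l4 ^ 3 / ((l2 - 2 * l4 - l1) * (l4 - l3) * (-2 * l2))
    = (1 / 2) * (l1 * l3 ^ 2 + l1 * l3 * l4 + l1 * l4 ^ 2 + 2 * l3 * l4 ^ 2 + 2 * l3 ^ 2 * l4)
        / ((2 * l3 + l1) * (2 * l4 + l1) * l2) := by
  have h34' : l3 - l4 ≠ 0 := sub_ne_zero.mpr h34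
  have h43' : l4 - l3 ≠ 0 := sub_ne_zero.mpr h34.symm
  calc _ = (l3 ^ 3 / ((2 * l3 + l1 - l2) * (l3 - l4) * (-2 * (2 * l3 + l1)))
          + l3 ^ 3 / ((l2 - (2 * l3 + l1)) * (l3 - l4) * (-2 * l2)))
        + (l4 ^ 3 / ((2 * l4 + l1 - l2) * (l4 - l3) * (-2 * (2 * l4 + l1)))
          + l4 ^ 3 / ((l2 - (2 * l4 + l1)) * (l4 - l3) * (-2 * l2))) := by ring
    _ = l3 ^ 3 / (2 * (2 * l3 + l1) * l2 * (l3 - l4))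
        + l4 ^ 3 / (2 * (2 * l4 + l1) * l2 * (l4 - l3)) := by
      rw [div_sub_mul_add_div_sub_mul_swap _ _ h3 hn3 hn2,
        div_sub_mul_add_div_sub_mul_swap _ _ h4 hn4 hn2]
    _ = _ := by
      rw [div_add_div _ _ (by positivity) (by positivity),
        div_eq_div_iff (by positivity) (by positivity)]
      ring
end

section
/- Let λ₁, λ₂, λ₃, λ₄ be real numbers with λ₁ ≠ λ₂, λ₃ ≠ λ₄ and λ_i + λ_j ≠ 0 for all i ∈ {1,2}, j ∈ {3,4}. Then the fractional triple intersection numbers of K_{F₀} satisfy ⟨C₁,C₁,C₂⟩ + ⟨C₁,C₂,C₂⟩ = −1/2, i.e. ∑_{(i,j)} λ_i λ_j (λ_i + λ_j)/(e_{ij}·(−2)(λ_i+λ_j)) = −1/2. -/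
/-- Constraint ⟨C₁,C₁,C₂⟩ + ⟨C₁,C₂,C₂⟩ = −1/2 for K_{F₀} via localization:
∑_{(i,j)} λᵢλⱼ(λᵢ+λⱼ)/(e_{ij}·(−2)(λᵢ+λⱼ)) = −1/2. -/
theorem KF0_constraint_12
    (l1 l2 l3 l4 : ℝ)
    (h12 : l1 ≠ l2) (h34 : l3 ≠ l4)
    (h13 : l1 + l3 ≠ 0) (h14 : l1 + l4 ≠ 0) (h23 : l2 + l3 ≠ 0) (h24 : l2 + l4 ≠ 0) :
    l1 * l3 * (l1 + l3) / ((l1 - l2) * (l3 - l4) * (-2) * (l1 + l3))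
      + l1 * l4 * (l1 + l4) / ((l1 - l2) * (l4 - l3) * (-2) * (l1 + l4))
      + l2 * l3 * (l2 + l3) / ((l2 - l1) * (l3 - l4) * (-2) * (l2 + l3))
      + l2 * l4 * (l2 + l4) / ((l2 - l1) * (l4 - l3) * (-2) * (l2 + l4)) = -1 / 2 := by
  have a : l1 - l2 ≠ 0 := sub_ne_zero.mpr h12
  have b : l3 - l4 ≠ 0 := sub_ne_zero.mpr h34
  have c : l4 - l3 ≠ 0 := sub_ne_zero.mpr h34.symm
  have a' : l2 - l1 ≠ 0 := sub_ne_zero.mpr h12.symm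
  have e1 : l1 * l3 * (l1 + l3) / ((l1 - l2) * (l3 - l4) * (-2) * (l1 + l3))
      = l1 * l3 / ((l1 - l2) * (l3 - l4) * (-2)) := by
    rw [mul_div_mul_right _ _ h13]
  have e2 : l1 * l4 * (l1 + l4) / ((l1 - l2) * (l4 - l3) * (-2) * (l1 + l4))
      = l1 * l4 / ((l1 - l2) * (l4 - l3) * (-2)) := by
    rw [mul_div_mul_right _ _ h14]
  have e3 : l2 * l3 * (l2 + l3) / ((l2 - l1) * (l3 - l4) * (-2) * (l2 + l3))
      = l2 * l3 / ((l2 - l1) * (l3 - l4) * (-2)) := by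
    rw [mul_div_mul_right _ _ h23]
  have e4 : l2 * l4 * (l2 + l4) / ((l2 - l1) * (l4 - l3) * (-2) * (l2 + l4))
      = l2 * l4 / ((l2 - l1) * (l4 - l3) * (-2)) := by
    rw [mul_div_mul_right _ _ h24]
  rw [e1, e2, e3, e4]
  have n2 : (-2 : ℝ) ≠ 0 := by norm_num
  have hD1 : (l1 - l2) * (l3 - l4) * (-2) ≠ 0 := mul_ne_zero (mul_ne_zero a b) n2
  have hD2 : (l1 - l2) * (l4 - l3) * (-2) ≠ 0 := mul_ne_zero (mul_ne_zero a c) n2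
  have hD3 : (l2 - l1) * (l3 - l4) * (-2) ≠ 0 := mul_ne_zero (mul_ne_zero a' b) n2
  have hD4 : (l2 - l1) * (l4 - l3) * (-2) ≠ 0 := mul_ne_zero (mul_ne_zero a' c) n2
  rw [div_add_div _ _ hD1 hD2, div_add_div _ _ (mul_ne_zero hD1 hD2) hD3,
    div_add_div _ _ (mul_ne_zero (mul_ne_zero hD1 hD2) hD3) hD4,
    div_eq_div_iff (mul_ne_zero (mul_ne_zero (mul_ne_zero hD1 hD2) hD3) hD4) (by norm_num : (2:ℝ) ≠ 0)]
  ring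
end

section
/- Let κ₁, κ₂, κ₃, κ₄ be real numbers with κ₃ ≠ κ₄, κ₁ ≠ κ₂ + κ₃, κ₁ ≠ κ₂ + κ₄, and 2κ₁+κ₃ ≠ 0, 2κ₁+κ₄ ≠ 0, 2κ₂+3κ₃ ≠ 0, 2κ₂+3κ₄ ≠ 0. Define the fractional triple intersection numbers of K_{F₁} by ⟨C_a,C_b,C_c⟩ = ∑_{p=1}^{4} u_a(p)u_b(p)u_c(p)/(e_p·(−(2a_p+b_p))), where u₁(p) = a_p, u₂(p) = b_p. Then 2⟨C₁,C₁,C₁⟩ + ⟨C₁,C₁,C₂⟩ = −1, 2⟨C₁,C₁,C₂⟩ + ⟨C₁,C₂,C₂⟩ = −1, and 2⟨C₁,C₂,C₂⟩ + ⟨C₂,C₂,C₂⟩ = 0. -/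
set_option maxHeartbeats 4000000 in


/-- The fractional triple intersection numbers of K_{F₁}, defined via
localization as ⟨C_a,C_b,C_c⟩ = ∑ₚ u_a(p)u_b(p)u_c(p)/(eₚ·(−(2aₚ+bₚ))),
satisfy the constraints 2⟨C₁,C₁,C₁⟩ + ⟨C₁,C₁,C₂⟩ = −1,
2⟨C₁,C₁,C₂⟩ + ⟨C₁,C₂,C₂⟩ = −1 and 2⟨C₁,C₂,C₂⟩ + ⟨C₂,C₂,C₂⟩ = 0. -/
theorem KF1_triple_intersection_constraints
    (k1 k2 k3 k4 : ℝ)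
    (h34 : k3 ≠ k4) (h3 : k1 ≠ k2 + k3) (h4 : k1 ≠ k2 + k4)
    (hn1 : 2 * k1 + k3 ≠ 0) (hn2 : 2 * k1 + k4 ≠ 0)
    (hn3 : 2 * k2 + 3 * k3 ≠ 0) (hn4 : 2 * k2 + 3 * k4 ≠ 0)
    (a b e : Fin 4 → ℝ)
    (ha0 : a 0 = k1) (ha1 : a 1 = k1) (ha2 : a 2 = k2 + k3) (ha3 : a 3 = k2 + k4)
    (hb0 : b 0 = k3) (hb1 : b 1 = k4) (hb2 : b 2 = k3) (hb3 : b 3 = k4)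
    (he0 : e 0 = (k1 - k2 - k3) * (k3 - k4)) (he1 : e 1 = (k1 - k2 - k4) * (k4 - k3))
    (he2 : e 2 = (k2 + k3 - k1) * (k3 - k4)) (he3 : e 3 = (k2 + k4 - k1) * (k4 - k3))
    (u : Fin 2 → Fin 4 → ℝ) (hu0 : u 0 = a) (hu1 : u 1 = b)
    (T : Fin 2 → Fin 2 → Fin 2 → ℝ)
    (hT : ∀ i j k, T i j k = ∑ p : Fin 4, u i p * u j p * u k p / (e p * (-(2 * a p + b p)))) :
    2 * T 0 0 0 + T 0 0 1 = -1 ∧ 2 * T 0 0 1 + T 0 1 1 = -1 ∧ 2 * T 0 1 1 + T 1 1 1 = 0 := by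
  have hd0 : e 0 * -(2 * a 0 + b 0) = -((k1 - k2 - k3) * ((k3 - k4) * (2 * k1 + k3))) := by
    rw [he0, ha0, hb0]; ring
  have hd1 : e 1 * -(2 * a 1 + b 1) = (k1 - k2 - k4) * ((k3 - k4) * (2 * k1 + k4)) := by
    rw [he1, ha1, hb1]; ring
  have hd2 : e 2 * -(2 * a 2 + b 2) = -((k2 + k3 - k1) * ((k3 - k4) * (2 * k2 + 3 * k3))) := by
    rw [he2, ha2, hb2]; ring
  have hd3 : e 3 * -(2 * a 3 + b 3) = (k2 + k4 - k1) * ((k3 - k4) * (2 * k2 + 3 * k4)) := by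
    rw [he3, ha3, hb3]; ring
  simp only [hT, Fin.sum_univ_four, hu0, hu1, hd0, hd1, hd2, hd3]
  simp only [ha0, ha1, ha2, ha3, hb0, hb1, hb2, hb3]
  set A := k1 - k2 - k3 with hA
  set B := k1 - k2 - k4 with hB
  set A' := k2 + k3 - k1 with hA'
  set B' := k2 + k4 - k1 with hB'
  set C := k3 - k4 with hC
  set P := 2 * k1 + k3 with hP
  set Q := 2 * k1 + k4 with hQ
  set R := 2 * k2 + 3 * k3 with hR
  set S := 2 * k2 + 3 * k4 with hS
  have hAne : A ≠ 0 := by rw [hA]; intro h; apply h3; linarith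
  have hBne : B ≠ 0 := by rw [hB]; intro h; apply h4; linarith
  have hA'ne : A' ≠ 0 := by rw [hA']; intro h; apply h3; linarith
  have hB'ne : B' ≠ 0 := by rw [hB']; intro h; apply h4; linarith
  have hCne : C ≠ 0 := by rw [hC]; exact sub_ne_zero.mpr h34
  refine ⟨?_, ?_, ?_⟩ <;>
  · field_simp
    rw [hA, hB, hA', hB', hC, hP, hQ, hR, hS]
    ring
end

section
/- Let T : {1,2,3}³ → ℝ be a symmetric 3-tensor (invariant under all permutations of its indices). Then T satisfies the constraints T(1,b,c) + T(2,b,c) + T(3,b,c) = −g(b,c) for all b, c ∈ {1,2,3}, where g(1,1) = g(1,2) = g(1,3) = g(2,3) = 1 and g(2,2) = g(3,3) = 0 (and g is symmetric), if and only if there exist x, y, z, w ∈ ℝ such that T(1,1,1) = −1+3x+3z+y+w, T(2,2,2) = −y, T(3,3,3) = −w, T(1,1,2) = −z−2x−y, T(1,1,3) = −x−2z−w, T(1,2,2) = x+y, T(1,3,3) = z+w, T(2,2,3) = −x, T(2,3,3) = −z and T(1,2,3) = x+z−1. -/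
/-- A symmetric 3-tensor T on {1,2,3} satisfies the K_{dP₂} constraints
T(1,b,c) + T(2,b,c) + T(3,b,c) = −g(b,c), with g(1,1) = g(1,2) = g(1,3) =
g(2,3) = 1 and g(2,2) = g(3,3) = 0, iff its values form the four-parameter
family (cldP) of classical triple intersection numbers for K_{dP₂}. -/
theorem KdP2_triple_intersection_family
    (T : Fin 3 → Fin 3 → Fin 3 → ℝ)
    (hsymm1 : ∀ a b c, T a b c = T b a c)
    (hsymm2 : ∀ a b c, T a b c = T a c b) :
    (∀ b c, T 0 b c + T 1 b c + T 2 b c = -(if b = c ∧ b ≠ 0 then (0 : ℝ) else 1)) ↔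
      ∃ x y z w : ℝ,
        T 0 0 0 = -1 + 3 * x + 3 * z + y + w ∧
        T 1 1 1 = -y ∧
        T 2 2 2 = -w ∧
        T 0 0 1 = -z - 2 * x - y ∧
        T 0 0 2 = -x - 2 * z - w ∧
        T 0 1 1 = x + y ∧
        T 0 2 2 = z + w ∧
        T 1 1 2 = -x ∧
        T 1 2 2 = -z ∧
        T 0 1 2 = x + z - 1 := by
  have e100 : T 1 0 0 = T 0 0 1 := by rw [hsymm1, hsymm2]
  have e200 : T 2 0 0 = T 0 0 2 := by rw [hsymm1, hsymm2]
  have e110 : T 1 1 0 = T 0 1 1 := by rw [hsymm2 1 1 0, hsymm1]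
  have e010 : T 0 1 0 = T 0 0 1 := by rw [hsymm2]
  have e210 : T 2 1 0 = T 0 1 2 := by
    rw [hsymm2 2 1 0, hsymm1 2 0 1, hsymm2 0 2 1]
  have e020 : T 0 2 0 = T 0 0 2 := by rw [hsymm2]
  have e120 : T 1 2 0 = T 0 1 2 := by rw [hsymm2 1 2 0, hsymm1]
  have e220 : T 2 2 0 = T 0 2 2 := by rw [hsymm2 2 2 0, hsymm1 2 0 2, hsymm2]
  have e101 : T 1 0 1 = T 0 1 1 := by rw [hsymm1]
  have e201 : T 2 0 1 = T 0 1 2 := by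
    rw [hsymm1 2 0 1, hsymm2 0 2 1]
  have e211 : T 2 1 1 = T 1 1 2 := by rw [hsymm1 2 1 1, hsymm2 1 2 1, hsymm1 1 1 2]
  have e102 : T 1 0 2 = T 0 1 2 := by rw [hsymm1]
  have e202 : T 2 0 2 = T 0 2 2 := by rw [hsymm1]
  have e212 : T 2 1 2 = T 1 2 2 := by rw [hsymm1]
  constructor
  · intro h
    have h00 := h 0 0
    have h01 := h 0 1
    have h02 := h 0 2
    have h11 := h 1 1
    have h12 := h 1 2
    have h22 := h 2 2
    simp only [e100, e200, e110, e010, e210, e020, e120, e220, e101, e201, e211, e102, e202,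
      e212] at h00 h01 h02 h11 h12 h22
    norm_num [Fin.ext_iff] at h00 h01 h02 h11 h12 h22
    exact ⟨-T 1 1 2, -T 1 1 1, -T 1 2 2, -T 2 2 2, by linarith, by ring, by ring,
      by linarith, by linarith, by linarith, by linarith, by ring, by ring, by linarith⟩
  · rintro ⟨x, y, z, w, h1, h2, h3, h4, h5, h6, h7, h8, h9, h10⟩ b c
    have k00 : T 0 0 0 + T 1 0 0 + T 2 0 0 = -(1 : ℝ) := by
      rw [e100, e200]; linarith
    have k01 : T 0 0 1 + T 1 0 1 + T 2 0 1 = -(1 : ℝ) := by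
      rw [e101, e201]; linarith
    have k02 : T 0 0 2 + T 1 0 2 + T 2 0 2 = -(1 : ℝ) := by
      rw [e102, e202]; linarith
    have k10 : T 0 1 0 + T 1 1 0 + T 2 1 0 = -(1 : ℝ) := by
      rw [e010, e110, e210]; linarith
    have k11 : T 0 1 1 + T 1 1 1 + T 2 1 1 = -(0 : ℝ) := by
      rw [e211]; linarith
    have k12 : T 0 1 2 + T 1 1 2 + T 2 1 2 = -(1 : ℝ) := by
      rw [e212]; linarith
    have k20 : T 0 2 0 + T 1 2 0 + T 2 2 0 = -(1 : ℝ) := by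
      rw [e020, e120, e220]; linarith
    have k21 : T 0 2 1 + T 1 2 1 + T 2 2 1 = -(1 : ℝ) := by
      rw [hsymm2 0 2 1, hsymm2 1 2 1, hsymm2 2 2 1, e212]; linarith
    have k22 : T 0 2 2 + T 1 2 2 + T 2 2 2 = -(0 : ℝ) := by linarith
    fin_cases b <;> fin_cases c <;>
      first
        | exact k00 | exact k01 | exact k02
        | exact k10 | exact k11 | exact k12
        | exact k20 | exact k21 | exact k22
end

section
/- For (t₁,t₂,t₃) ∈ (−∞,0)³ define F(t₁,t₂,t₃) = (1/2) t₁t₂t₃ + ∑_{n=1}^∞ ( e^{n t₁} + e^{n t₂} + e^{n t₃} − e^{n(t₁+t₂)} − e^{n(t₁+t₃)} − e^{n(t₂+t₃)} + e^{n(t₁+t₂+t₃)} ) / n³. Then the series converges, F is three times continuously differentiable on (−∞,0)³, and its third partial derivatives are: ∂³F/∂t₁³ = e^{t₁}/(1−e^{t₁}) − e^{t₁+t₂}/(1−e^{t₁+t₂}) − e^{t₁+t₃}/(1−e^{t₁+t₃}) + e^{t₁+t₂+t₃}/(1−e^{t₁+t₂+t₃}); ∂³F/∂t₁²∂t₂ =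 −e^{t₁+t₂}/(1−e^{t₁+t₂}) + e^{t₁+t₂+t₃}/(1−e^{t₁+t₂+t₃}); and ∂³F/∂t₁∂t₂∂t₃ = 1/2 + e^{t₁+t₂+t₃}/(1−e^{t₁+t₂+t₃}). -/
/-!
Writing `Lᵏ(x) = Li_k(eˣ) = ∑ₙ e^{nx}/nᵏ` (`expPolylog k x`), the prepotential is
`F = ½ t₁t₂t₃ + ∑_S ± L³(t_S)`, the sum running over the seven curve classes `t_S`.
On `x < 0` the series may be differentiated termwise (it is dominated by a geometric series), so
`(Lᵏ⁺¹)' = Lᵏ`, and `L⁰(x) = eˣ/(1 - eˣ)` is a geometric series. Each partial derivative `∂ᵢ` thus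
lowers the index by one and kills the classes not containing `tᵢ`.
-/

open Real

/-- The prepotential of the trivalent toric graph geometry:
F(t₁,t₂,t₃) = (1/2)t₁t₂t₃ + ∑_{n≥1} (e^{nt₁}+e^{nt₂}+e^{nt₃}−e^{n(t₁+t₂)}
−e^{n(t₁+t₃)}−e^{n(t₂+t₃)}+e^{n(t₁+t₂+t₃)})/n³. -/
noncomputable def trivalentPrepotential (t1 t2 t3 : ℝ) : ℝ :=
  (1 / 2) * t1 * t2 * t3 + ∑' n : ℕ,
    (exp (((n : ℝ) + 1) * t1) + exp (((n : ℝ) + 1) * t2) + exp (((n : ℝ) + 1) * t3)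
      - exp (((n : ℝ) + 1) * (t1 + t2)) - exp (((n : ℝ) + 1) * (t1 + t3))
      - exp (((n : ℝ) + 1) * (t2 + t3)) + exp (((n : ℝ) + 1) * (t1 + t2 + t3)))
      / ((n : ℝ) + 1) ^ 3

open Set
open scoped ContDiff

theorem Set.EqOn.deriv_of_hasDerivAt {𝕜 F : Type*} [NontriviallyNormedField 𝕜]
    [NormedAddCommGroup F] [NormedSpace 𝕜 F] {f g g' : 𝕜 → F} {s : Set 𝕜}
    (hfg : EqOn f g s) (hs : IsOpen s) (hg : ∀ x ∈ s, HasDerivAt g (g' x) x) :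
    EqOn (_root_.deriv f) g' s :=
  fun x hx => (hfg.deriv hs hx).trans (hg x hx).deriv

noncomputable def expPolylog (k : ℕ) (x : ℝ) : ℝ :=
  ∑' n : ℕ, exp (((n : ℝ) + 1) * x) / ((n : ℝ) + 1) ^ k

lemma exp_natCast_add_one_mul (n : ℕ) (x : ℝ) : exp (((n : ℝ) + 1) * x) = exp x ^ (n + 1) := by
  rw [← exp_nat_mul]; push_cast; rfl

lemma exp_natCast_add_one_mul_div_pow_le (k n : ℕ) (x : ℝ) :
    exp (((n : ℝ) + 1) * x) / ((n : ℝ) + 1) ^ k ≤ exp x ^ (n + 1) := by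
  rw [exp_natCast_add_one_mul]
  exact div_le_self (by positivity) (one_le_pow₀ (by linarith [n.cast_nonneg (α := ℝ)]))

lemma summable_exp_pow_succ {x : ℝ} (hx : x < 0) : Summable fun n : ℕ => exp x ^ (n + 1) :=
  (summable_nat_add_iff 1).2 <| summable_geometric_of_lt_one (exp_pos x).le (exp_lt_one_iff.2 hx)

lemma hasSum_expPolylog (k : ℕ) {x : ℝ} (hx : x < 0) :
    HasSum (fun n : ℕ => exp (((n : ℝ) + 1) * x) / ((n : ℝ) + 1) ^ k) (expPolylog k x) :=
  (Summable.of_nonneg_of_le (fun n => by positivity) (exp_natCast_add_one_mul_div_pow_le k · x)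
    (summable_exp_pow_succ hx)).hasSum

lemma expPolylog_zero {x : ℝ} (hx : x < 0) : expPolylog 0 x = exp x / (1 - exp x) := by
  have h := (hasSum_geometric_of_lt_one (exp_pos x).le (exp_lt_one_iff.2 hx)).mul_left (exp x)
  refine (hasSum_expPolylog 0 hx).unique (h.congr_fun fun n => ?_)
  rw [pow_zero, div_one, exp_natCast_add_one_mul, pow_succ']

lemma hasDerivAt_exp_natCast_add_one_mul_div_pow (k n : ℕ) (x : ℝ) :
    HasDerivAt (fun y => exp (((n : ℝ) + 1) * y) / ((n : ℝ) + 1) ^ (k + 1))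
      (exp (((n : ℝ) + 1) * x) / ((n : ℝ) + 1) ^ k) x := by
  have h := (((hasDerivAt_id' x).const_mul ((n : ℝ) + 1)).exp).div_const (((n : ℝ) + 1) ^ (k + 1))
  refine h.congr_deriv ?_
  field_simp
  ring

lemma hasDerivAt_expPolylog_succ (k : ℕ) {x : ℝ} (hx : x < 0) :
    HasDerivAt (expPolylog (k + 1)) (expPolylog k x) x := by
  have hbound (n : ℕ) (y : ℝ) (hy : y ∈ Iio (x / 2)) :
      ‖exp (((n : ℝ) + 1) * y) / ((n : ℝ) + 1) ^ k‖ ≤ exp (x / 2) ^ (n + 1) := by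
    rw [norm_of_nonneg (by positivity)]
    exact (exp_natCast_add_one_mul_div_pow_le k n y).trans
      (pow_le_pow_left₀ (exp_pos y).le (exp_le_exp.2 (le_of_lt hy)) _)
  have hx2 : x ∈ Iio (x / 2) := by rw [mem_Iio]; linarith
  exact hasDerivAt_tsum_of_isPreconnected (summable_exp_pow_succ (by linarith)) isOpen_Iio
    isPreconnected_Iio (fun n y _ => hasDerivAt_exp_natCast_add_one_mul_div_pow k n y) hbound hx2
    (hasSum_expPolylog (k + 1) hx).summable hx2

theorem HasDerivAt.expPolylog_succ {f : ℝ → ℝ} {f' x : ℝ} (k : ℕ) (hf : HasDerivAt f f' x)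
    (hx : f x < 0) : HasDerivAt (fun y => expPolylog (k + 1) (f y)) (expPolylog k (f x) * f') x :=
  (hasDerivAt_expPolylog_succ k hx).comp x hf

lemma contDiffOn_expPolylog (k : ℕ) : ContDiffOn ℝ ∞ (expPolylog k) (Iio 0) := by
  induction k with
  | zero =>
    refine ContDiffOn.congr ?_ fun x hx => expPolylog_zero hx
    exact contDiff_exp.contDiffOn.div (contDiff_const.sub contDiff_exp).contDiffOn
      fun x hx => (sub_pos.2 (exp_lt_one_iff.2 hx)).ne'
  | succ k ih =>
    rw [contDiffOn_infty_iff_deriv_of_isOpen isOpen_Iio]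
    exact ⟨fun x hx => (hasDerivAt_expPolylog_succ k hx).differentiableAt.differentiableWithinAt,
      ih.congr fun x hx => (hasDerivAt_expPolylog_succ k hx).deriv⟩

@[fun_prop]
theorem ContDiffOn.expPolylog {E : Type*} [NormedAddCommGroup E] [NormedSpace ℝ E] {f : E → ℝ}
    {s : Set E} (k : ℕ) (hf : ContDiffOn ℝ ∞ f s) (hneg : ∀ x ∈ s, f x < 0) :
    ContDiffOn ℝ ∞ (fun x => expPolylog k (f x)) s :=
  (contDiffOn_expPolylog k).comp hf hneg

noncomputable def trivalentInstanton (k : ℕ) (t1 t2 t3 : ℝ) : ℝ :=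
  expPolylog k t1 + expPolylog k t2 + expPolylog k t3 - expPolylog k (t1 + t2)
    - expPolylog k (t1 + t3) - expPolylog k (t2 + t3) + expPolylog k (t1 + t2 + t3)

/-- The terms of `trivalentInstanton` whose curve class contains `t₁`: the partial derivative
`∂₁ trivalentInstanton (k + 1)`. -/
noncomputable def trivalentInstanton₁ (k : ℕ) (t1 t2 t3 : ℝ) : ℝ :=
  expPolylog k t1 - expPolylog k (t1 + t2) - expPolylog k (t1 + t3) + expPolylog k (t1 + t2 + t3)

/-- The terms of `trivalentInstanton` whose curve class contains `t₁` and `t₂`: the partial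
derivative `∂₁∂₂ trivalentInstanton (k + 2)`. -/
noncomputable def trivalentInstanton₁₂ (k : ℕ) (t1 t2 t3 : ℝ) : ℝ :=
  -expPolylog k (t1 + t2) + expPolylog k (t1 + t2 + t3)

section

variable {t1 t2 t3 : ℝ}

lemma hasSum_trivalentInstanton (k : ℕ) (h1 : t1 < 0) (h2 : t2 < 0) (h3 : t3 < 0) :
    HasSum (fun n : ℕ =>
        (exp (((n : ℝ) + 1) * t1) + exp (((n : ℝ) + 1) * t2) + exp (((n : ℝ) + 1) * t3)
          - exp (((n : ℝ) + 1) * (t1 + t2)) - exp (((n : ℝ) + 1) * (t1 + t3))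
          - exp (((n : ℝ) + 1) * (t2 + t3)) + exp (((n : ℝ) + 1) * (t1 + t2 + t3)))
          / ((n : ℝ) + 1) ^ k)
      (trivalentInstanton k t1 t2 t3) := by
  have h {x : ℝ} (hx : x < 0) := hasSum_expPolylog k hx
  refine ((((((h h1).add (h h2)).add (h h3)).sub (h (add_neg h1 h2))).sub
    (h (add_neg h1 h3))).sub (h (add_neg h2 h3))).add (h (add_neg (add_neg h1 h2) h3))
    |>.congr_fun fun n => ?_
  ring

lemma trivalentPrepotential_eq (h1 : t1 < 0) (h2 : t2 < 0) (h3 : t3 < 0) :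
    trivalentPrepotential t1 t2 t3 = 1 / 2 * t1 * t2 * t3 + trivalentInstanton 3 t1 t2 t3 := by
  rw [trivalentPrepotential, (hasSum_trivalentInstanton 3 h1 h2 h3).tsum_eq]

lemma contDiffOn_trivalentPrepotential :
    ContDiffOn ℝ ∞ (fun p : ℝ × ℝ × ℝ => trivalentPrepotential p.1 p.2.1 p.2.2)
      (Iio 0 ×ˢ Iio 0 ×ˢ Iio 0) := by
  refine ContDiffOn.congr ?_ fun p ⟨h1, h2, h3⟩ => trivalentPrepotential_eq h1 h2 h3
  unfold trivalentInstanton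
  fun_prop (disch := rintro p ⟨h1 : p.1 < 0, h2 : p.2.1 < 0, h3 : p.2.2 < 0⟩; linarith)

lemma hasDerivAt_trivalentInstanton₁_fst (k : ℕ) (h1 : t1 < 0) (h2 : t2 < 0) (h3 : t3 < 0) :
    HasDerivAt (fun s => trivalentInstanton₁ (k + 1) s t2 t3)
      (trivalentInstanton₁ k t1 t2 t3) t1 := by
  have hs := hasDerivAt_id' t1
  have := (((hs.expPolylog_succ k h1).sub ((hs.add_const t2).expPolylog_succ k (by linarith))).sub
    ((hs.add_const t3).expPolylog_succ k (by linarith))).add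
    (((hs.add_const t2).add_const t3).expPolylog_succ k (by linarith))
  exact this.congr_deriv (by simp only [trivalentInstanton₁, mul_one])

lemma hasDerivAt_trivalentInstanton₁_snd (k : ℕ) (h1 : t1 < 0) (h2 : t2 < 0) (h3 : t3 < 0) :
    HasDerivAt (fun u => trivalentInstanton₁ (k + 1) t1 u t3)
      (trivalentInstanton₁₂ k t1 t2 t3) t2 := by
  have hu := hasDerivAt_id' t2
  have := (((hasDerivAt_const t2 (expPolylog (k + 1) t1)).sub
    ((hu.const_add t1).expPolylog_succ k (by linarith))).sub_const
    (expPolylog (k + 1) (t1 + t3))).add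
    (((hu.const_add t1).add_const t3).expPolylog_succ k (by linarith))
  exact this.congr_deriv (by simp only [trivalentInstanton₁₂, mul_one]; ring)

lemma hasDerivAt_trivalentInstanton₁₂_thd (k : ℕ) (h1 : t1 < 0) (h2 : t2 < 0) (h3 : t3 < 0) :
    HasDerivAt (fun w => trivalentInstanton₁₂ (k + 1) t1 t2 w)
      (expPolylog k (t1 + t2 + t3)) t3 :=
  ((((hasDerivAt_id' t3).const_add (t1 + t2)).expPolylog_succ k
    (by linarith)).const_add (-expPolylog (k + 1) (t1 + t2))).congr_deriv (mul_one _)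

lemma trivalentInstanton_eq_trivalentInstanton₁_add (k : ℕ) (t1 t2 t3 : ℝ) :
    trivalentInstanton k t1 t2 t3 = trivalentInstanton₁ k t1 t2 t3
      + (expPolylog k t2 + expPolylog k t3 - expPolylog k (t2 + t3)) := by
  simp only [trivalentInstanton, trivalentInstanton₁]; ring

lemma hasDerivAt_trivalentPrepotential_fst (h1 : t1 < 0) (h2 : t2 < 0) (h3 : t3 < 0) :
    HasDerivAt (fun s => trivalentPrepotential s t2 t3)
      (1 / 2 * t2 * t3 + trivalentInstanton₁ 2 t1 t2 t3) t1 := by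
  have hclosed : (fun s => 1 / 2 * s * t2 * t3 + trivalentInstanton 3 s t2 t3) =ᶠ[nhds t1]
      fun s => trivalentPrepotential s t2 t3 :=
    Filter.eventually_of_mem (Iio_mem_nhds h1) fun s hs => (trivalentPrepotential_eq hs h2 h3).symm
  simp only [trivalentInstanton_eq_trivalentInstanton₁_add] at hclosed
  have := (((((hasDerivAt_id' t1).const_mul (1 / 2)).mul_const t2).mul_const t3).add
    ((hasDerivAt_trivalentInstanton₁_fst 2 h1 h2 h3).add_const
    (expPolylog 3 t2 + expPolylog 3 t3 - expPolylog 3 (t2 + t3))))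
  exact (this.congr_of_eventuallyEq hclosed.symm).congr_deriv (by ring)

lemma eqOn_deriv_trivalentPrepotential_fst (h2 : t2 < 0) (h3 : t3 < 0) :
    EqOn (deriv fun s => trivalentPrepotential s t2 t3)
      (fun s => 1 / 2 * t2 * t3 + trivalentInstanton₁ 2 s t2 t3) (Iio 0) :=
  fun _ hs => (hasDerivAt_trivalentPrepotential_fst hs h2 h3).deriv

lemma eqOn_iterate_deriv_two_trivalentPrepotential_fst (h2 : t2 < 0) (h3 : t3 < 0) :
    EqOn (deriv^[2] fun s => trivalentPrepotential s t2 t3)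
      (fun s => trivalentInstanton₁ 1 s t2 t3) (Iio 0) :=
  (eqOn_deriv_trivalentPrepotential_fst h2 h3).deriv_of_hasDerivAt isOpen_Iio fun _ hs =>
    (hasDerivAt_trivalentInstanton₁_fst 1 hs h2 h3).const_add _

lemma iterate_deriv_three_trivalentPrepotential_fst (h1 : t1 < 0) (h2 : t2 < 0) (h3 : t3 < 0) :
    deriv^[3] (fun s => trivalentPrepotential s t2 t3) t1 = trivalentInstanton₁ 0 t1 t2 t3 :=
  (eqOn_iterate_deriv_two_trivalentPrepotential_fst h2 h3).deriv_of_hasDerivAt isOpen_Iio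
    (fun _ hs => hasDerivAt_trivalentInstanton₁_fst 0 hs h2 h3) h1

lemma deriv_snd_iterate_deriv_two_trivalentPrepotential_fst (h1 : t1 < 0) (h2 : t2 < 0)
    (h3 : t3 < 0) :
    deriv (fun u => deriv^[2] (fun s => trivalentPrepotential s u t3) t1) t2 =
      trivalentInstanton₁₂ 0 t1 t2 t3 :=
  Set.EqOn.deriv_of_hasDerivAt (g := fun u => trivalentInstanton₁ 1 t1 u t3)
    (fun _ hu => eqOn_iterate_deriv_two_trivalentPrepotential_fst hu h3 h1) isOpen_Iio
    (fun _ hu => hasDerivAt_trivalentInstanton₁_snd 0 h1 hu h3) h2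

lemma deriv_thd_deriv_snd_deriv_trivalentPrepotential_fst (h1 : t1 < 0) (h2 : t2 < 0)
    (h3 : t3 < 0) :
    deriv (fun w => deriv (fun u => deriv (fun s => trivalentPrepotential s u w) t1) t2) t3 =
      1 / 2 + expPolylog 0 (t1 + t2 + t3) := by
  have hsnd : EqOn (fun w => deriv (fun u => deriv (fun s => trivalentPrepotential s u w) t1) t2)
      (fun w => 1 / 2 * w + trivalentInstanton₁₂ 1 t1 t2 w) (Iio 0) := fun w hw =>
    Set.EqOn.deriv_of_hasDerivAt (g := fun u => 1 / 2 * u * w + trivalentInstanton₁ 2 t1 u w)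
      (g' := fun u => 1 / 2 * w + trivalentInstanton₁₂ 1 t1 u w)
      (fun _ hu => eqOn_deriv_trivalentPrepotential_fst hu hw h1) isOpen_Iio
      (fun u hu => ((((hasDerivAt_id' u).const_mul (1 / 2)).mul_const w).add
        (hasDerivAt_trivalentInstanton₁_snd 1 h1 hu hw)).congr_deriv (by ring)) h2
  exact hsnd.deriv_of_hasDerivAt (g' := fun w => 1 / 2 + expPolylog 0 (t1 + t2 + w)) isOpen_Iio
    (fun w hw => (((hasDerivAt_id' w).const_mul (1 / 2)).add
    (hasDerivAt_trivalentInstanton₁₂_thd 0 h1 h2 hw)).congr_deriv (by ring)) h3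

end

/-- The series defining the trivalent prepotential converges on (−∞,0)³, the
prepotential is C³ there, and its third partial derivatives are the A-model
Yukawa couplings Y₁₁₁, Y₁₁₂, Y₁₂₃ of the trivalent toric graph. -/
theorem trivalent_prepotential_yukawa :
    (∀ t1 t2 t3 : ℝ, t1 < 0 → t2 < 0 → t3 < 0 →
      Summable fun n : ℕ =>
        (exp (((n : ℝ) + 1) * t1) + exp (((n : ℝ) + 1) * t2) + exp (((n : ℝ) + 1) * t3)
          - exp (((n : ℝ) + 1) * (t1 + t2)) - exp (((n : ℝ) + 1) * (t1 + t3))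
          - exp (((n : ℝ) + 1) * (t2 + t3)) + exp (((n : ℝ) + 1) * (t1 + t2 + t3)))
          / ((n : ℝ) + 1) ^ 3) ∧
    ContDiffOn ℝ 3 (fun p : ℝ × ℝ × ℝ => trivalentPrepotential p.1 p.2.1 p.2.2)
      (Set.Iio 0 ×ˢ Set.Iio 0 ×ˢ Set.Iio 0) ∧
    (∀ t1 t2 t3 : ℝ, t1 < 0 → t2 < 0 → t3 < 0 →
      deriv^[3] (fun s => trivalentPrepotential s t2 t3) t1 =
        exp t1 / (1 - exp t1) - exp (t1 + t2) / (1 - exp (t1 + t2))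
          - exp (t1 + t3) / (1 - exp (t1 + t3))
          + exp (t1 + t2 + t3) / (1 - exp (t1 + t2 + t3))) ∧
    (∀ t1 t2 t3 : ℝ, t1 < 0 → t2 < 0 → t3 < 0 →
      deriv (fun u => deriv^[2] (fun s => trivalentPrepotential s u t3) t1) t2 =
        -exp (t1 + t2) / (1 - exp (t1 + t2))
          + exp (t1 + t2 + t3) / (1 - exp (t1 + t2 + t3))) ∧
    (∀ t1 t2 t3 : ℝ, t1 < 0 → t2 < 0 → t3 < 0 →
      deriv (fun w => deriv (fun u => deriv
          (fun s => trivalentPrepotential s u w) t1) t2) t3 =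
        1 / 2 + exp (t1 + t2 + t3) / (1 - exp (t1 + t2 + t3))) := by
  refine ⟨fun t1 t2 t3 h1 h2 h3 => (hasSum_trivalentInstanton 3 h1 h2 h3).summable,
    contDiffOn_trivalentPrepotential.of_le (by norm_cast), fun t1 t2 t3 h1 h2 h3 => ?_,
    fun t1 t2 t3 h1 h2 h3 => ?_, fun t1 t2 t3 h1 h2 h3 => ?_⟩
  · rw [iterate_deriv_three_trivalentPrepotential_fst h1 h2 h3, trivalentInstanton₁,
      expPolylog_zero h1, expPolylog_zero (add_neg h1 h2), expPolylog_zero (add_neg h1 h3),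
      expPolylog_zero (add_neg (add_neg h1 h2) h3)]
  · rw [deriv_snd_iterate_deriv_two_trivalentPrepotential_fst h1 h2 h3, trivalentInstanton₁₂,
      expPolylog_zero (add_neg h1 h2), expPolylog_zero (add_neg (add_neg h1 h2) h3), neg_div]
  · rw [deriv_thd_deriv_snd_deriv_trivalentPrepotential_fst h1 h2 h3,
      expPolylog_zero (add_neg (add_neg h1 h2) h3)]
end
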